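/- Let G and H be subdigraphs of a digraph with canonical map f : G ⊔ H → G ∪ H, let C(f) be the modified mapping cone, and let S be the induced subdigraph of C(f) on the vertex set consisting of the vertices of G ∩ H in G ∪ H, the two copies of the vertices of G ∩ H in the middle slice, and the apex ∗. Then the inclusion j : S ↪ C(f) is a homotopy equivalence; explicitly, the retraction r : C(f) → S sending every vertex outside j(S) to ∗ and fixing j(S) satisfies r∘j = id_S and j∘r ≃ id_{C(f)}. -/

import Mathlib

/-- A directed graph: a vertex type with a loopless edge relation. -/
structure DGraph where
  V : Type
  E : V → V → Prop
  loopless : ∀ v, ¬ E v v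

/-- A digraph map: each edge is collapsed or preserved. -/
structure DMap (G H : DGraph) where
  toFun : G.V → H.V
  map_edge : ∀ {x y}, G.E x y → toFun x = toFun y ∨ H.E (toFun x) (toFun y)

def DMap.id (G : DGraph) : DMap G G := ⟨fun x => x, fun e => Or.inr e⟩

def DMap.comp {G H K : DGraph} (g : DMap H K) (f : DMap G H) : DMap G K :=
  ⟨fun x => g.toFun (f.toFun x), fun e => by
    rcases f.map_edge e with h | h
    · exact Or.inl (congrArg g.toFun h)
    · exact g.map_edge h⟩

/-- The `n`-step line digraph with orientations given by `o`:
if `o i` then the edge between `i` and `i+1` goes `i → i+1`, else `i+1 → i`. -/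
def lineD (n : ℕ) (o : ℕ → Bool) : DGraph where
  V := Fin (n+1)
  E i j := ((j:ℕ) = (i:ℕ)+1 ∧ o (i:ℕ) = true) ∨ ((i:ℕ) = (j:ℕ)+1 ∧ o (j:ℕ) = false)
  loopless := by rintro v (⟨h,_⟩|⟨h,_⟩) <;> omega

/-- The box product of digraphs. -/
def boxProd (G H : DGraph) : DGraph where
  V := G.V × H.V
  E p q := (p.1 = q.1 ∧ H.E p.2 q.2) ∨ (G.E p.1 q.1 ∧ p.2 = q.2)
  loopless := by
    rintro ⟨a,b⟩ (⟨_,h⟩|⟨h,_⟩)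
    · exact H.loopless _ h
    · exact G.loopless _ h

/-- Homotopy of digraph maps via a line-digraph parametrized family. -/
def Homotopic {G H : DGraph} (f g : DMap G H) : Prop :=
  ∃ (n : ℕ) (o : ℕ → Bool) (F : DMap (boxProd G (lineD n o)) H),
    (∀ x, F.toFun (x, (0 : Fin (n+1))) = f.toFun x) ∧
    (∀ x, F.toFun (x, Fin.last n) = g.toFun x)

def DMap.const (G H : DGraph) (c : H.V) : DMap G H := ⟨fun _ => c, fun _ => Or.inl rfl⟩

/-- A digraph is contractible if its identity is homotopic to a constant map. -/
def Contractible (G : DGraph) : Prop :=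
  ∃ c : G.V, Homotopic (DMap.id G) (DMap.const G G c)

/-- Homotopy equivalence of digraphs. -/
def HomotopyEquivalence {G H : DGraph} (u : DMap G H) (v : DMap H G) : Prop :=
  Homotopic (v.comp u) (DMap.id G) ∧ Homotopic (u.comp v) (DMap.id H)

open CategoryTheory

/-- A subdigraph of a digraph, given by subsets of vertices and edges. -/
structure Subdigraph (Y : DGraph) where
  verts : Set Y.V
  edges : Y.V → Y.V → Prop
  edge_sub : ∀ {x y}, edges x y → Y.E x y
  edge_mem : ∀ {x y}, edges x y → x ∈ verts ∧ y ∈ verts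

namespace Subdigraph
variable {Y : DGraph}

def le (A B : Subdigraph Y) : Prop :=
  A.verts ⊆ B.verts ∧ ∀ {x y}, A.edges x y → B.edges x y

def union (A B : Subdigraph Y) : Subdigraph Y where
  verts := A.verts ∪ B.verts
  edges x y := A.edges x y ∨ B.edges x y
  edge_sub := by rintro x y (h|h) <;> [exact A.edge_sub h; exact B.edge_sub h]
  edge_mem := by
    rintro x y (h|h)
    · exact ⟨Or.inl (A.edge_mem h).1, Or.inl (A.edge_mem h).2⟩
    · exact ⟨Or.inr (B.edge_mem h).1, Or.inr (B.edge_mem h).2⟩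

def inter (A B : Subdigraph Y) : Subdigraph Y where
  verts := A.verts ∩ B.verts
  edges x y := A.edges x y ∧ B.edges x y
  edge_sub h := A.edge_sub h.1
  edge_mem h := ⟨⟨(A.edge_mem h.1).1, (B.edge_mem h.2).1⟩, (A.edge_mem h.1).2, (B.edge_mem h.2).2⟩

/-- The digraph determined by a subdigraph. -/
def toD (A : Subdigraph Y) : DGraph where
  V := {v // v ∈ A.verts}
  E x y := A.edges x.val y.val
  loopless v h := Y.loopless v.val (A.edge_sub h)

def inclDMap {A B : Subdigraph Y} (h : A.le B) : DMap A.toD B.toD :=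
  ⟨fun v => ⟨v.val, h.1 v.prop⟩, fun e => Or.inr (h.2 e)⟩

/-- Inclusion of a subdigraph into the ambient digraph. -/
def inclY (A : Subdigraph Y) : DMap A.toD Y :=
  ⟨fun v => v.val, fun e => Or.inr (A.edge_sub e)⟩

theorem le_union_left (A B : Subdigraph Y) : A.le (A.union B) :=
  ⟨fun _ h => Or.inl h, fun e => Or.inl e⟩
theorem le_union_right (A B : Subdigraph Y) : B.le (A.union B) :=
  ⟨fun _ h => Or.inr h, fun e => Or.inr e⟩
theorem inter_le_left (A B : Subdigraph Y) : (A.inter B).le A :=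
  ⟨fun _ h => h.1, fun e => e.1⟩
theorem inter_le_right (A B : Subdigraph Y) : (A.inter B).le B :=
  ⟨fun _ h => h.2, fun e => e.2⟩

theorem finiteV {A : Subdigraph Y} (h : A.verts.Finite) : Finite A.toD.V :=
  h.to_subtype

theorem inter_verts_finite {A B : Subdigraph Y} (hA : A.verts.Finite) :
    (A.inter B).verts.Finite := hA.subset Set.inter_subset_left

theorem union_verts_finite {A B : Subdigraph Y} (hA : A.verts.Finite)
    (hB : B.verts.Finite) : (A.union B).verts.Finite := hA.union hB
end Subdigraph

/-- Disjoint union (coproduct) of a family of digraphs. -/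
def sigmaD {ι : Type} (G : ι → DGraph) : DGraph where
  V := Σ i, (G i).V
  E a b := ∃ h : a.1 = b.1, (G b.1).E (cast (congrArg (fun i => (G i).V) h) a.2) b.2
  loopless := by rintro ⟨i, x⟩ ⟨h, e⟩; exact (G i).loopless x e

def sigmaIncl {ι : Type} (G : ι → DGraph) (i : ι) : DMap (G i) (sigmaD G) :=
  ⟨fun x => ⟨i, x⟩, fun e => Or.inr ⟨rfl, e⟩⟩

/-- Binary disjoint union of digraphs. -/
def sumD (G H : DGraph) : DGraph where
  V := Sum G.V H.V
  E a b :=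
    match a, b with
    | Sum.inl x, Sum.inl y => G.E x y
    | Sum.inr x, Sum.inr y => H.E x y
    | _, _ => False
  loopless := by
    rintro (x|x) h
    · exact G.loopless x h
    · exact H.loopless x h

/-- A digraph Brown functor: a contravariant, homotopy-invariant, abelian-group valued
functor on finite digraphs satisfying the triviality, additivity and Mayer–Vietoris axioms. -/
structure BrownFunctor where
  obj : ∀ (G : DGraph), Finite G.V → AddCommGrpCat
  map : ∀ {G H : DGraph} (hG : Finite G.V) (hH : Finite H.V),
    DMap G H → (obj H hH ⟶ obj G hG)
  map_id : ∀ (G : DGraph) (hG : Finite G.V), map hG hG (DMap.id G) = 𝟙 (obj G hG)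
  map_comp : ∀ {G H K : DGraph} (hG : Finite G.V) (hH : Finite H.V) (hK : Finite K.V)
    (f : DMap G H) (g : DMap H K), map hG hK (g.comp f) = (map hH hK g) ≫ (map hG hH f)
  map_homotopic : ∀ {G H : DGraph} (hG : Finite G.V) (hH : Finite H.V)
    (f g : DMap G H), Homotopic f g → map hG hH f = map hG hH g
  triviality : ∀ (G : DGraph) (hG : Finite G.V), Subsingleton G.V → Nonempty G.V →
    ∀ x : obj G hG, x = 0
  additivity : ∀ {ι : Type} [Finite ι] (Gf : ι → DGraph) (h : ∀ i, Finite (Gf i).V),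
    Function.Bijective (fun (x : obj (sigmaD Gf) (by have := h; exact Finite.instSigma)) i =>
      map (h i) _ (sigmaIncl Gf i) x)
  mayer_vietoris : ∀ (Y : DGraph) (A B : Subdigraph Y)
    (hA : A.verts.Finite) (hB : B.verts.Finite)
    (a : obj A.toD (Subdigraph.finiteV hA)) (b : obj B.toD (Subdigraph.finiteV hB)),
    map (Subdigraph.finiteV (Subdigraph.inter_verts_finite hA)) _
        (Subdigraph.inclDMap (Subdigraph.inter_le_left A B)) a =
    map (Subdigraph.finiteV (Subdigraph.inter_verts_finite hA)) _
        (Subdigraph.inclDMap (Subdigraph.inter_le_right A B)) b →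
    ∃ c : obj (A.union B).toD (Subdigraph.finiteV (Subdigraph.union_verts_finite hA hB)),
      map _ _ (Subdigraph.inclDMap (Subdigraph.le_union_left A B)) c = a ∧
      map _ _ (Subdigraph.inclDMap (Subdigraph.le_union_right A B)) c = b

/-- A vertex of `H` with at least two `f`-preimages. -/
def Im2 {G H : DGraph} (f : DMap G H) (h : H.V) : Prop :=
  ∃ a b : G.V, a ≠ b ∧ f.toFun a = h ∧ f.toFun b = h

/-- Edges of the image digraph `f(G)`. -/
def imE {G H : DGraph} (f : DMap G H) (h h' : H.V) : Prop :=
  h ≠ h' ∧ ∃ x y : G.V, G.E x y ∧ f.toFun x = h ∧ f.toFun y = h'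

/-- Vertices `h' ∈ V_im2(f)` admitting an image-edge `(h,h')` with `h ∉ V_im2(f)`. -/
def V1' {G H : DGraph} (f : DMap G H) (h' : H.V) : Prop :=
  Im2 f h' ∧ ∃ h : H.V, ¬ Im2 f h ∧ imE f h h'

/-- Vertices `h ∈ V_im2(f)` admitting an image-edge `(h,h')` with `h' ∉ V_im2(f)`. -/
def V1'' {G H : DGraph} (f : DMap G H) (h : H.V) : Prop :=
  Im2 f h ∧ ∃ h' : H.V, ¬ Im2 f h' ∧ imE f h h'

/-- Model of the modified mapping cone `C(f)` of `f : G → H`, given a choice function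
`gh` selecting the preimage `g_h` for `h ∈ V₁' ∪ V₁''`.  Vertices: `inl (inl g)` is the
middle copy of `G`, `inl (inr h)` is `H`, `inr ()` is the apex `∗`. -/
def Cone {G H : DGraph} (f : DMap G H) (gh : H.V → G.V) : DGraph where
  V := Sum (Sum G.V H.V) Unit
  E a b :=
    match a, b with
    | Sum.inl (Sum.inl x), Sum.inl (Sum.inl y) => G.E x y
    | Sum.inl (Sum.inr h), Sum.inl (Sum.inr h') => H.E h h'
    | Sum.inl (Sum.inl x), Sum.inl (Sum.inr h) =>
        h = f.toFun x ∨ (imE f (f.toFun x) h ∧ Im2 f h ∧ ¬ Im2 f (f.toFun x))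
        ∨ ((V1' f h ∨ V1'' f h) ∧ x = gh h)
    | Sum.inl (Sum.inr h), Sum.inl (Sum.inl y) =>
        imE f h (f.toFun y) ∧ Im2 f h ∧ ¬ Im2 f (f.toFun y)
    | Sum.inl (Sum.inl _), Sum.inr _ => True          -- ((g,0),∗)
    | Sum.inr _, Sum.inl (Sum.inl _) => True          -- (∗,(g,0))
    | Sum.inr _, Sum.inl (Sum.inr h) => V1' f h       -- (∗,h')
    | Sum.inl (Sum.inr h), Sum.inr _ => V1'' f h      -- (h,∗)
    | Sum.inr _, Sum.inr _ => False
  loopless := by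
    rintro ((x | h) | u) hh
    · exact G.loopless _ hh
    · exact H.loopless _ hh
    · exact hh

/-- The natural embedding `H ↪ C(f)`. -/
def ConeInclH {G H : DGraph} (f : DMap G H) (gh : H.V → G.V) : DMap H (Cone f gh) :=
  ⟨fun h => Sum.inl (Sum.inr h), fun e => Or.inr e⟩

/-- The inclusion of the middle copy of `G` into `C(f)`. -/
def ConeInclG {G H : DGraph} (f : DMap G H) (gh : H.V → G.V) : DMap G (Cone f gh) :=
  ⟨fun x => Sum.inl (Sum.inl x), fun e => Or.inr e⟩

/-- The apex vertex `∗` of `C(f)`. -/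
def ConeApex {G H : DGraph} (f : DMap G H) (gh : H.V → G.V) : (Cone f gh).V :=
  Sum.inr ()

/-- The canonical map `G ⊔ H → G ∪ H` for two subdigraphs of a common digraph. -/
def canonSumToUnion {Y : DGraph} (A B : Subdigraph Y) :
    DMap (sumD A.toD B.toD) (A.union B).toD where
  toFun v :=
    match v with
    | Sum.inl x => ⟨x.val, Or.inl x.prop⟩
    | Sum.inr x => ⟨x.val, Or.inr x.prop⟩
  map_edge := by
    rintro (x | x) (y | y) e
    · exact Or.inr (Or.inl e)
    · exact e.elim
    · exact e.elim
    · exact Or.inr (Or.inr e)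

/-- The induced subdigraph of a digraph on a vertex predicate. -/
def inducedOn (C : DGraph) (P : C.V → Prop) : DGraph where
  V := {v // P v}
  E a b := C.E a.val b.val
  loopless v h := C.loopless v.val h

/-- The vertex predicate describing `S ⊆ C(f)`: the vertices of `G ∩ H` inside `G ∪ H`,
the two copies of the vertices of `G ∩ H` in the middle slice, and the apex `∗`. -/
def SPred {Y : DGraph} (A B : Subdigraph Y)
    (gh : (A.union B).toD.V → (sumD A.toD B.toD).V) :
    (Cone (canonSumToUnion A B) gh).V → Prop := fun v =>
  match v with
  | Sum.inl (Sum.inl (Sum.inl x)) => x.val ∈ B.verts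
  | Sum.inl (Sum.inl (Sum.inr x)) => x.val ∈ A.verts
  | Sum.inl (Sum.inr u) => u.val ∈ A.verts ∧ u.val ∈ B.verts
  | Sum.inr _ => True


section St15Aux

variable {Y : DGraph} (A B : Subdigraph Y)

private lemma st15_im2_iff (h : (A.union B).toD.V) :
    Im2 (canonSumToUnion A B) h ↔ (h.val ∈ A.verts ∧ h.val ∈ B.verts) := by
  constructor
  · rintro ⟨a, b, hne, ha, hb⟩
    rcases a with x | x <;> rcases b with y | y
    · exfalso
      have hx : x.val = h.val := congrArg Subtype.val ha
      have hy : y.val = h.val := congrArg Subtype.val hb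
      exact hne (congrArg Sum.inl (Subtype.ext (hx.trans hy.symm)))
    · have hx : x.val = h.val := congrArg Subtype.val ha
      have hy : y.val = h.val := congrArg Subtype.val hb
      exact ⟨hx ▸ x.prop, hy ▸ y.prop⟩
    · have hx : x.val = h.val := congrArg Subtype.val ha
      have hy : y.val = h.val := congrArg Subtype.val hb
      exact ⟨hy ▸ y.prop, hx ▸ x.prop⟩
    · exfalso
      have hx : x.val = h.val := congrArg Subtype.val ha
      have hy : y.val = h.val := congrArg Subtype.val hb
      exact hne (congrArg Sum.inr (Subtype.ext (hx.trans hy.symm)))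
  · rintro ⟨hA, hB⟩
    exact ⟨Sum.inl ⟨h.val, hA⟩, Sum.inr ⟨h.val, hB⟩, Sum.inl_ne_inr,
      Subtype.ext rfl, Subtype.ext rfl⟩

private lemma st15_imE {h h' : (A.union B).toD.V} (hne : h ≠ h')
    (e : (A.union B).edges h.val h'.val) : imE (canonSumToUnion A B) h h' := by
  refine ⟨hne, ?_⟩
  rcases e with e | e
  · exact ⟨Sum.inl ⟨h.val, (A.edge_mem e).1⟩, Sum.inl ⟨h'.val, (A.edge_mem e).2⟩,
      e, Subtype.ext rfl, Subtype.ext rfl⟩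
  · exact ⟨Sum.inr ⟨h.val, (B.edge_mem e).1⟩, Sum.inr ⟨h'.val, (B.edge_mem e).2⟩,
      e, Subtype.ext rfl, Subtype.ext rfl⟩

variable (gh : (A.union B).toD.V → (sumD A.toD B.toD).V)

open Classical in
/-- The retraction `r : C(f) → S`. -/
private noncomputable def st15_r
    (hgh : ∀ h, (V1' (canonSumToUnion A B) h ∨ V1'' (canonSumToUnion A B) h) →
      (canonSumToUnion A B).toFun (gh h) = h) :
    DMap (Cone (canonSumToUnion A B) gh)
      (inducedOn (Cone (canonSumToUnion A B) gh) (SPred A B gh)) where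
  toFun v := if h : SPred A B gh v then ⟨v, h⟩ else ⟨Sum.inr (), trivial⟩
  map_edge := by
    intro x y e
    show (@dite {v // SPred A B gh v} (SPred A B gh x) _ (fun h => ⟨x, h⟩) (fun _ => ⟨Sum.inr (), trivial⟩)) = (@dite {v // SPred A B gh v} (SPred A B gh y) _ (fun h => ⟨y, h⟩) (fun _ => ⟨Sum.inr (), trivial⟩)) ∨
      (Cone (canonSumToUnion A B) gh).E (@dite {v // SPred A B gh v} (SPred A B gh x) _ (fun h => ⟨x, h⟩) (fun _ => ⟨Sum.inr (), trivial⟩)).val (@dite {v // SPred A B gh v} (SPred A B gh y) _ (fun h => ⟨y, h⟩) (fun _ => ⟨Sum.inr (), trivial⟩)).val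
    by_cases hx : SPred A B gh x <;> by_cases hy : SPred A B gh y
    · rw [dif_pos hx, dif_pos hy]; exact Or.inr e
    · rw [dif_pos hx, dif_neg hy]
      rcases x with (x | h) | u
      · exact Or.inr trivial
      · rcases y with (y | h') | u'
        · exact Or.inr ⟨e.2.1, _, e.2.2, e.1⟩
        · right
          have hne : h ≠ h' := fun hq => hy (by rw [← hq]; exact hx)
          exact ⟨(st15_im2_iff A B h).mpr hx, h',
            fun h2 => hy ((st15_im2_iff A B h').mp h2), st15_imE A B hne e⟩
        · exact absurd trivial hy
      · exact Or.inl (Subtype.ext rfl)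
    · rw [dif_neg hx, dif_pos hy]
      rcases y with (y | h') | u'
      · exact Or.inr trivial
      · rcases x with (x | h) | u
        · right
          have key : h' = (canonSumToUnion A B).toFun x → False := by
            intro hq
            rcases x with a | a
            · have hv : h'.val = a.val := congrArg Subtype.val hq
              have hy2 : h'.val ∈ B.verts := hy.2
              exact hx (show a.val ∈ B.verts from hv ▸ hy2)
            · have hv : h'.val = a.val := congrArg Subtype.val hq
              have hy1 : h'.val ∈ A.verts := hy.1
              exact hx (show a.val ∈ A.verts from hv ▸ hy1)
          rcases e with e1 | e2 | e3
          · exact absurd e1 key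
          · exact ⟨e2.2.1, _, e2.2.2, e2.1⟩
          · exact absurd (by rw [e3.2]; exact (hgh h' e3.1).symm) key
        · right
          have hne : h ≠ h' := fun hq => hx (by rw [hq]; exact hy)
          exact ⟨(st15_im2_iff A B h').mpr hy, h,
            fun h2 => hx ((st15_im2_iff A B h).mp h2), st15_imE A B hne e⟩
        · exact absurd trivial hx
      · exact Or.inl (Subtype.ext rfl)
    · rw [dif_neg hx, dif_neg hy]; exact Or.inl rfl

private lemma st15_r_pos (hgh) {v} (h : SPred A B gh v) :
    (st15_r A B gh hgh).toFun v = ⟨v, h⟩ := dif_pos h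

private lemma st15_r_neg (hgh) {v} (h : ¬ SPred A B gh v) :
    (st15_r A B gh hgh).toFun v = ⟨Sum.inr (), trivial⟩ := dif_neg h

open Classical in
/-- Lift of a vertex of the union into the disjoint union. -/
private noncomputable def st15_lift (u : (A.union B).toD.V) : (sumD A.toD B.toD).V :=
  if hA : u.val ∈ A.verts then Sum.inl ⟨u.val, hA⟩
  else Sum.inr ⟨u.val, Or.resolve_left u.prop hA⟩

private lemma st15_lift_spec (u : (A.union B).toD.V) :
    (canonSumToUnion A B).toFun (st15_lift A B u) = u := by
  by_cases hA : u.val ∈ A.verts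
  · have h1 : st15_lift A B u = Sum.inl ⟨u.val, hA⟩ := dif_pos hA
    rw [h1]; exact Subtype.ext rfl
  · have h1 : st15_lift A B u = Sum.inr ⟨u.val, Or.resolve_left u.prop hA⟩ := dif_neg hA
    rw [h1]; exact Subtype.ext rfl

private lemma st15_lift_of_A {u : (A.union B).toD.V} (hA : u.val ∈ A.verts) :
    st15_lift A B u = Sum.inl ⟨u.val, hA⟩ := dif_pos hA

private lemma st15_lift_of_notA {u : (A.union B).toD.V} (hA : ¬ u.val ∈ A.verts) :
    st15_lift A B u = Sum.inr ⟨u.val, Or.resolve_left u.prop hA⟩ := dif_neg hA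

private lemma st15_lift_eq {u : (A.union B).toD.V}
    (hS : ¬ (u.val ∈ A.verts ∧ u.val ∈ B.verts)) (x : (sumD A.toD B.toD).V)
    (hq : u = (canonSumToUnion A B).toFun x) : st15_lift A B u = x := by
  rcases x with a | a
  · have hv : u.val = a.val := congrArg Subtype.val hq
    rw [st15_lift_of_A A B (show u.val ∈ A.verts from hv ▸ a.prop)]
    exact congrArg Sum.inl (Subtype.ext hv)
  · have hv : u.val = a.val := congrArg Subtype.val hq
    have hB : u.val ∈ B.verts := hv ▸ a.prop
    rw [st15_lift_of_notA A B (fun hA => hS ⟨hA, hB⟩)]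
    exact congrArg Sum.inr (Subtype.ext hv)

open Classical in
/-- Intermediate stage of the homotopy: push non-`S` base vertices into the middle slice. -/
private noncomputable def st15_phi1 :
    (Cone (canonSumToUnion A B) gh).V → (Cone (canonSumToUnion A B) gh).V := fun v =>
  match v with
  | Sum.inl (Sum.inr u) =>
      if u.val ∈ A.verts ∧ u.val ∈ B.verts then Sum.inl (Sum.inr u)
      else Sum.inl (Sum.inl (st15_lift A B u))
  | w => w

private lemma st15_phi1_mid (m) :
    st15_phi1 A B gh (Sum.inl (Sum.inl m)) = Sum.inl (Sum.inl m) := rfl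

private lemma st15_phi1_apex (w : Unit) :
    st15_phi1 A B gh (Sum.inr w) = Sum.inr w := rfl

private lemma st15_phi1_bot_pos {u} (h : u.val ∈ A.verts ∧ u.val ∈ B.verts) :
    st15_phi1 A B gh (Sum.inl (Sum.inr u)) = Sum.inl (Sum.inr u) := if_pos h

private lemma st15_phi1_bot_neg {u} (h : ¬ (u.val ∈ A.verts ∧ u.val ∈ B.verts)) :
    st15_phi1 A B gh (Sum.inl (Sum.inr u)) = Sum.inl (Sum.inl (st15_lift A B u)) := if_neg h

private lemma st15_phi1_inS {v} (hv : SPred A B gh v) : st15_phi1 A B gh v = v := by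
  rcases v with (m | u) | w
  · rfl
  · exact st15_phi1_bot_pos A B gh hv
  · rfl

private lemma st15_phi1_map
    (hgh : ∀ h, (V1' (canonSumToUnion A B) h ∨ V1'' (canonSumToUnion A B) h) →
      (canonSumToUnion A B).toFun (gh h) = h) :
    ∀ {x y}, (Cone (canonSumToUnion A B) gh).E x y →
      st15_phi1 A B gh x = st15_phi1 A B gh y ∨
      (Cone (canonSumToUnion A B) gh).E (st15_phi1 A B gh x) (st15_phi1 A B gh y) := by
  rintro ((m | u) | w) ((m' | u') | w') e
  · exact Or.inr e
  · -- middle → base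
    by_cases hS : u'.val ∈ A.verts ∧ u'.val ∈ B.verts
    · rw [st15_phi1_mid, st15_phi1_bot_pos A B gh hS]; exact Or.inr e
    · rw [st15_phi1_mid, st15_phi1_bot_neg A B gh hS]
      rcases e with e1 | e2 | e3
      · exact Or.inl (by rw [st15_lift_eq A B hS m e1])
      · exact absurd ((st15_im2_iff A B u').mp e2.2.1) hS
      · have e1 : u' = (canonSumToUnion A B).toFun m := by
          rw [e3.2]; exact (hgh u' e3.1).symm
        exact Or.inl (by rw [st15_lift_eq A B hS m e1])
  · exact Or.inr e
  · -- base → middle : forces `u ∈ S`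
    rw [st15_phi1_mid, st15_phi1_bot_pos A B gh ((st15_im2_iff A B u).mp e.2.1)]
    exact Or.inr e
  · -- base → base
    by_cases hS : u.val ∈ A.verts ∧ u.val ∈ B.verts <;>
      by_cases hS' : u'.val ∈ A.verts ∧ u'.val ∈ B.verts
    · rw [st15_phi1_bot_pos A B gh hS, st15_phi1_bot_pos A B gh hS']; exact Or.inr e
    · rw [st15_phi1_bot_pos A B gh hS, st15_phi1_bot_neg A B gh hS']
      right
      have hne : u ≠ u' := fun hq => hS' (hq ▸ hS)
      refine ⟨?_, (st15_im2_iff A B u).mpr hS, ?_⟩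
      · rw [st15_lift_spec]; exact st15_imE A B hne e
      · rw [st15_lift_spec]; exact fun h2 => hS' ((st15_im2_iff A B u').mp h2)
    · rw [st15_phi1_bot_neg A B gh hS, st15_phi1_bot_pos A B gh hS']
      right
      have hne : u ≠ u' := fun hq => hS (hq ▸ hS')
      refine Or.inr (Or.inl ⟨?_, (st15_im2_iff A B u').mpr hS', ?_⟩)
      · rw [st15_lift_spec]; exact st15_imE A B hne e
      · rw [st15_lift_spec]; exact fun h2 => hS ((st15_im2_iff A B u).mp h2)
    · rw [st15_phi1_bot_neg A B gh hS, st15_phi1_bot_neg A B gh hS']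
      right
      rcases e with eA | eB
      · rw [st15_lift_of_A A B (A.edge_mem eA).1, st15_lift_of_A A B (A.edge_mem eA).2]
        exact eA
      · have hAn : ¬ u.val ∈ A.verts := fun hA => hS ⟨hA, (B.edge_mem eB).1⟩
        have hAn' : ¬ u'.val ∈ A.verts := fun hA => hS' ⟨hA, (B.edge_mem eB).2⟩
        rw [st15_lift_of_notA A B hAn, st15_lift_of_notA A B hAn']
        exact eB
  · -- base → apex : `V1''` forces `u ∈ S`
    rw [st15_phi1_bot_pos A B gh ((st15_im2_iff A B u).mp e.1)]
    exact Or.inr e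
  · exact Or.inr e
  · -- apex → base : `V1'` forces `u' ∈ S`
    rw [st15_phi1_bot_pos A B gh ((st15_im2_iff A B u').mp e.1)]
    exact Or.inr e
  · exact e.elim

/-- The homotopy, parametrized by a natural-number time. -/
private noncomputable def st15_F
    (hgh : ∀ h, (V1' (canonSumToUnion A B) h ∨ V1'' (canonSumToUnion A B) h) →
      (canonSumToUnion A B).toFun (gh h) = h) :
    (Cone (canonSumToUnion A B) gh).V → ℕ → (Cone (canonSumToUnion A B) gh).V := fun x n =>
  match n with
  | 0 => ((st15_r A B gh hgh).toFun x).val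
  | 1 => st15_phi1 A B gh x
  | _ => x

private lemma st15_vert (hgh) (x) (n : ℕ) :
    st15_F A B gh hgh x n = st15_F A B gh hgh x (n + 1) ∨
    (Cone (canonSumToUnion A B) gh).E (st15_F A B gh hgh x n) (st15_F A B gh hgh x (n + 1)) := by
  match n with
  | 0 =>
    show ((st15_r A B gh hgh).toFun x).val = st15_phi1 A B gh x ∨
      (Cone (canonSumToUnion A B) gh).E ((st15_r A B gh hgh).toFun x).val (st15_phi1 A B gh x)
    by_cases hx : SPred A B gh x
    · left
      rw [st15_r_pos A B gh hgh hx, st15_phi1_inS A B gh hx]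
    · right
      rw [st15_r_neg A B gh hgh hx]
      rcases x with (m | u) | w
      · exact trivial
      · rw [st15_phi1_bot_neg A B gh hx]
        exact trivial
      · exact absurd trivial hx
  | 1 =>
    show st15_phi1 A B gh x = x ∨ (Cone (canonSumToUnion A B) gh).E (st15_phi1 A B gh x) x
    rcases x with (m | u) | w
    · exact Or.inl rfl
    · by_cases hS : u.val ∈ A.verts ∧ u.val ∈ B.verts
      · exact Or.inl (st15_phi1_bot_pos A B gh hS)
      · rw [st15_phi1_bot_neg A B gh hS]
        exact Or.inr (Or.inl (st15_lift_spec A B u).symm)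
    · exact Or.inl rfl
  | (n + 2) => exact Or.inl rfl

private lemma st15_horiz (hgh) {x y}
    (hE : (Cone (canonSumToUnion A B) gh).E x y) (n : ℕ) :
    st15_F A B gh hgh x n = st15_F A B gh hgh y n ∨
    (Cone (canonSumToUnion A B) gh).E (st15_F A B gh hgh x n) (st15_F A B gh hgh y n) := by
  match n with
  | 0 =>
    rcases (st15_r A B gh hgh).map_edge hE with h | h
    · exact Or.inl (congrArg Subtype.val h)
    · exact Or.inr h
  | 1 => exact st15_phi1_map A B gh hgh hE
  | (n + 2) => exact Or.inr hE

end St15Aux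

/-- Let `f : G ⊔ H → G ∪ H` be the canonical map of two subdigraphs,
`C(f)` the modified mapping cone, and `S` the induced subdigraph of `C(f)` on the vertices
of `G ∩ H` in `G ∪ H`, the two middle-slice copies of `G ∩ H`, and the apex `∗`.  Then the
inclusion `j : S ↪ C(f)` is a homotopy equivalence, with homotopy inverse the retraction
`r` fixing `j(S)` and sending everything else to `∗`: `r ∘ j = id_S` and `j ∘ r ≃ id`. -/
theorem cone_S_homotopy_equivalence {Y : DGraph} (A B : Subdigraph Y)
    (gh : (A.union B).toD.V → (sumD A.toD B.toD).V)
    (hgh : ∀ h, (V1' (canonSumToUnion A B) h ∨ V1'' (canonSumToUnion A B) h) →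
      (canonSumToUnion A B).toFun (gh h) = h) :
    ∃ (j : DMap (inducedOn (Cone (canonSumToUnion A B) gh) (SPred A B gh))
          (Cone (canonSumToUnion A B) gh))
      (r : DMap (Cone (canonSumToUnion A B) gh)
          (inducedOn (Cone (canonSumToUnion A B) gh) (SPred A B gh))),
      j.toFun = Subtype.val ∧
      (∀ v (h : SPred A B gh v), r.toFun v = ⟨v, h⟩) ∧
      (∀ v, ¬ SPred A B gh v → r.toFun v = ⟨Sum.inr (), trivial⟩) ∧
      (∀ s, (r.comp j).toFun s = s) ∧
      Homotopic (j.comp r) (DMap.id (Cone (canonSumToUnion A B) gh)) := by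
  classical
  refine ⟨⟨Subtype.val, fun e => Or.inr e⟩, st15_r A B gh hgh, rfl,
    fun v h => dif_pos h, fun v h => dif_neg h, fun s => dif_pos s.prop, ?_⟩
  refine ⟨2, fun _ => true, ⟨fun p => st15_F A B gh hgh p.1 (Fin.val p.2), ?_⟩,
    fun x => rfl, fun x => rfl⟩
  rintro ⟨x, i⟩ ⟨y, j⟩ (⟨hxy, hline⟩ | ⟨hE, hij⟩)
  · cases hxy
    dsimp only
    rcases hline with ⟨hj, _⟩ | ⟨_, ho⟩
    · have hj' : Fin.val j = Fin.val i + 1 := hj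
      rw [hj']
      exact st15_vert A B gh hgh x (Fin.val i)
    · exact absurd ho (by simp)
  · cases hij
    dsimp only
    exact st15_horiz A B gh hgh hE (Fin.val i)
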